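/- For every integer n ≥ 2, the structure of the algebra C₁ lies in the closure of the union over all α ∈ ℂ of the GL(V)-orbits of the structures of C₂(α); that is, the family {C₂(α)}_{α ∈ ℂ} degenerates to C₁. -/

import Mathlib

/-! Conjugating by a diagonal map `g = diag(d₁, …, d_{n+1})` of determinant one multiplies the
product of the basis vectors other than `e_j` by `d_j`, after applying `g` to it. For
`g_t = diag(t, 1, t⁻¹, 1, …, 1)` this turns `C₂(t⁻²)` into `[e₂, …, e_{n+1}] = e₁ + t e₂`,
`[e₁, e₃, …, e_{n+1}] = e₂`, i.e. `C₁ + t (C₂(1) - C₁)`, which tends to `C₁` as `t → 0`.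
The entry `t⁻¹` needs a third coordinate, hence `n ≥ 2`. -/

open Function Submodule

/-! Common framework: `V = ℂ^{n+1}`, `n`-ary multiplications as functions
`(Fin n → V) → V`, the action of `GL(V)` on them, orbits, and the
(n+1)-dimensional n-ary Filippov algebras of Kaygorodov–Volkov, each described
as an alternating `n`-linear map by its values on the increasing tuples of
distinct standard basis vectors (0-indexed: `bt n j` is the tuple omitting `e j`). -/

/-- The underlying space `V = ℂ^{n+1}`. -/
abbrev nV (n : ℕ) : Type := Fin (n + 1) → ℂ

/-- The `j`-th standard basis vector of `V` (0-indexed). -/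
def sb (n : ℕ) (j : Fin (n + 1)) : nV n := Pi.single j 1

/-- The increasing `n`-tuple of standard basis vectors omitting `e j`. -/
def bt (n : ℕ) (j : Fin (n + 1)) : Fin n → nV n := fun k => sb n (j.succAbove k)

/-- The action of `GL(V)` (invertible linear maps) on `n`-ary multiplications:
`(g • μ)(x₁, …, xₙ) = g (μ (g⁻¹ x₁, …, g⁻¹ xₙ))`. -/
noncomputable def glAct (n : ℕ) (g : nV n ≃ₗ[ℂ] nV n) (μ : (Fin n → nV n) → nV n) :
    (Fin n → nV n) → nV n :=
  fun x => g (μ fun i => g.symm (x i))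

/-- The `GL(V)`-orbit of an `n`-ary multiplication. -/
def glOrbit (n : ℕ) (μ : (Fin n → nV n) → nV n) : Set ((Fin n → nV n) → nV n) :=
  {ν | ∃ g : nV n ≃ₗ[ℂ] nV n, ν = glAct n g μ}

/-- The algebra `B`: `[e₂, …, e_{n+1}] = e₁` (0-indexed: the tuple omitting `e 0`
maps to `e 0`), all other increasing basis products zero. -/
def IsB (n : ℕ) (μ : AlternatingMap ℂ (nV n) (nV n) (Fin n)) : Prop :=
  μ (bt n 0) = sb n 0 ∧ ∀ j : Fin (n + 1), j ≠ 0 → μ (bt n j) = 0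

/-- The algebra `C₁`: `[e₂, …, e_{n+1}] = e₁`, `[e₁, e₃, …, e_{n+1}] = e₂`. -/
def IsC1 (n : ℕ) (μ : AlternatingMap ℂ (nV n) (nV n) (Fin n)) : Prop :=
  μ (bt n 0) = sb n 0 ∧ μ (bt n 1) = sb n 1 ∧
    ∀ j : Fin (n + 1), j ≠ 0 → j ≠ 1 → μ (bt n j) = 0

/-- The algebra `C₂(α)`: `[e₂, …, e_{n+1}] = α e₁ + e₂`, `[e₁, e₃, …, e_{n+1}] = e₂`. -/
def IsC2 (n : ℕ) (α : ℂ) (μ : AlternatingMap ℂ (nV n) (nV n) (Fin n)) : Prop :=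
  μ (bt n 0) = α • sb n 0 + sb n 1 ∧ μ (bt n 1) = sb n 1 ∧
    ∀ j : Fin (n + 1), j ≠ 0 → j ≠ 1 → μ (bt n j) = 0

/-- The algebra `C₃`: `[e₁, e₃, …, e_{n+1}] = e₁`, `[e₂, e₃, …, e_{n+1}] = e₂`. -/
def IsC3 (n : ℕ) (μ : AlternatingMap ℂ (nV n) (nV n) (Fin n)) : Prop :=
  μ (bt n 1) = sb n 0 ∧ μ (bt n 0) = sb n 1 ∧
    ∀ j : Fin (n + 1), j ≠ 0 → j ≠ 1 → μ (bt n j) = 0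

/-- The algebra `D_r`: `[e₁, …, e_{i-1}, e_{i+1}, …, e_{n+1}] = e_i` for `1 ≤ i ≤ r`
(0-indexed: the tuple omitting `e j` maps to `e j` for `j < r` and to `0` otherwise). -/
def IsD (n r : ℕ) (μ : AlternatingMap ℂ (nV n) (nV n) (Fin n)) : Prop :=
  ∀ j : Fin (n + 1), ((j : ℕ) < r → μ (bt n j) = sb n j) ∧ (r ≤ (j : ℕ) → μ (bt n j) = 0)

theorem Fin.exists_perm_comp_eq_succAbove {n : ℕ} {v : Fin n → Fin (n + 1)}
    (hv : Injective v) : ∃ (j : Fin (n + 1)) (σ : Equiv.Perm (Fin n)), v ∘ σ = j.succAbove := by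
  obtain ⟨j, hj⟩ : ∃ j, j ∉ Set.range v := by
    by_contra! h
    have := Fintype.card_le_of_surjective v fun j => h j
    simp at this
  choose w hw using fun k => Fin.exists_succAbove_eq fun h : v k = j => hj ⟨k, h⟩
  have hw_inj : Injective w := fun a b hab => hv (by rw [← hw a, ← hw b, hab])
  let σ := Equiv.ofBijective w (Finite.injective_iff_bijective.mp hw_inj)
  refine ⟨j, σ.symm, funext fun k => ?_⟩
  rw [comp_apply, ← hw]
  exact congrArg _ (σ.apply_symm_apply k)

theorem AlternatingMap.ext_bt {n : ℕ} {f g : AlternatingMap ℂ (nV n) (nV n) (Fin n)}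
    (h : ∀ j, f (bt n j) = g (bt n j)) : f = g := by
  refine (Pi.basisFun ℂ (Fin (n + 1))).ext_alternating fun v hv => ?_
  obtain ⟨j, σ, hσ⟩ := Fin.exists_perm_comp_eq_succAbove hv
  have hbt : (fun i => Pi.basisFun ℂ (Fin (n + 1)) (v i)) ∘ σ = bt n j := by
    funext i
    simp [bt, sb, ← hσ]
  have hf := f.map_perm (fun i => Pi.basisFun ℂ (Fin (n + 1)) (v i)) σ
  have hg := g.map_perm (fun i => Pi.basisFun ℂ (Fin (n + 1)) (v i)) σ
  rw [hbt] at hf hg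
  rw [h j, hg] at hf
  exact smul_left_cancel _ hf.symm

theorem glAct_eq_of_forall_bt {n : ℕ} (e : nV n ≃ₗ[ℂ] nV n)
    (f ν : AlternatingMap ℂ (nV n) (nV n) (Fin n))
    (h : ∀ j, glAct n e f (bt n j) = ν (bt n j)) : glAct n e f = ν :=
  congrArg DFunLike.coe <| AlternatingMap.ext_bt
    (f := e.toLinearMap.compAlternatingMap (f.compLinearMap e.symm.toLinearMap)) h

noncomputable def diagEquiv {n : ℕ} (d : Fin (n + 1) → ℂˣ) : nV n ≃ₗ[ℂ] nV n :=
  LinearEquiv.piCongrRight fun i => LinearEquiv.smulOfUnit (d i)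

theorem diagEquiv_sb {n : ℕ} (d : Fin (n + 1) → ℂˣ) (i : Fin (n + 1)) :
    diagEquiv d (sb n i) = d i • sb n i := by
  funext k
  by_cases hk : k = i <;> simp [diagEquiv, sb, LinearEquiv.smulOfUnit, hk]

theorem diagEquiv_symm_sb {n : ℕ} (d : Fin (n + 1) → ℂˣ) (i : Fin (n + 1)) :
    (diagEquiv d).symm (sb n i) = (d i)⁻¹ • sb n i := by
  rw [LinearEquiv.symm_apply_eq, Units.smul_def, map_smul, diagEquiv_sb, ← Units.smul_def,
    inv_smul_smul]

theorem glAct_diagEquiv_bt {n : ℕ} (d : Fin (n + 1) → ℂˣ)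
    (f : AlternatingMap ℂ (nV n) (nV n) (Fin n)) (j : Fin (n + 1)) :
    glAct n (diagEquiv d) f (bt n j) = (d j / ∏ i, d i) • diagEquiv d (f (bt n j)) := by
  have hargs : (fun k => (diagEquiv d).symm (bt n j k))
      = fun k => ((d (j.succAbove k))⁻¹ : ℂˣ) • bt n j k :=
    funext fun k => diagEquiv_symm_sb d _
  have hprod : ∏ k, (d (j.succAbove k))⁻¹ = d j / ∏ i, d i := by
    rw [Fin.prod_univ_succAbove _ j, Finset.prod_inv_distrib, div_mul_cancel_left]
  simp only [glAct, hargs, Units.smul_def, f.map_smul_univ, map_smul, ← Units.coe_prod,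
    hprod]

theorem mem_closure_of_forall_add_smul_mem {𝕜 E : Type*} [NontriviallyNormedField 𝕜]
    [AddCommMonoid E] [Module 𝕜 E] [TopologicalSpace E] [ContinuousAdd E] [ContinuousSMul 𝕜 E]
    {s : Set E} {x y : E} (h : ∀ t : 𝕜, t ≠ 0 → x + t • y ∈ s) : x ∈ closure s := by
  have hlim : Filter.Tendsto (fun t : 𝕜 => x + t • y) (nhdsWithin 0 {0}ᶜ) (nhds x) := by
    have hcont : Continuous fun t : 𝕜 => x + t • y := by fun_prop
    simpa using (hcont.tendsto 0).mono_left nhdsWithin_le_nhds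
  exact mem_closure_of_tendsto hlim (eventually_nhdsWithin_of_forall h)

def c2ToC1Diag (m : ℕ) (t : ℂˣ) : Fin (m + 2 + 1) → ℂˣ :=
  Fin.cons t (Fin.cons 1 (Fin.cons t⁻¹ 1))

theorem glAct_c2ToC1Diag_of_isC2 {m : ℕ} (t : ℂˣ)
    {f g ν : AlternatingMap ℂ (nV (m + 2)) (nV (m + 2)) (Fin (m + 2))}
    (hf : IsC2 (m + 2) ((t : ℂ)⁻¹ ^ 2) f) (hg : IsC2 (m + 2) 1 g) (hν : IsC1 (m + 2) ν) :
    glAct (m + 2) (diagEquiv (c2ToC1Diag m t)) f = ⇑(ν + (t : ℂ) • (g - ν)) := by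
  have hdet : ∏ i, c2ToC1Diag m t i = 1 := by simp [c2ToC1Diag, Fin.prod_cons]
  refine glAct_eq_of_forall_bt _ _ _ fun j => ?_
  rw [glAct_diagEquiv_bt, hdet, div_one]
  by_cases h0 : j = 0
  · subst h0
    simp only [c2ToC1Diag, Fin.cons_zero, Fin.cons_one, hf.1, hg.1, hν.1, map_add, map_smul,
      diagEquiv_sb, Units.smul_def, smul_smul, one_smul, smul_add, AlternatingMap.add_apply,
      AlternatingMap.smul_apply, AlternatingMap.sub_apply, add_sub_cancel_left, inv_pow,
      add_left_inj]
    rw [show (t : ℂ) * (((t : ℂ) ^ 2)⁻¹ * t) = 1 by field_simp, one_smul]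
  by_cases h1 : j = 1
  · subst h1
    simp [hf.2.1, hg.2.1, hν.2.1, diagEquiv_sb, c2ToC1Diag]
  simp [hf.2.2 j h0 h1, hg.2.2 j h0 h1, hν.2.2 j h0 h1]

/-- For every integer `n ≥ 2`, the structure of `C₁` lies in the closure of
the union over all `α ∈ ℂ` of the `GL(V)`-orbits of the structures `C₂(α)`. -/
theorem C2_family_degenerates_to_C1 (n : ℕ) (hn : 2 ≤ n)
    (μ : ℂ → AlternatingMap ℂ (nV n) (nV n) (Fin n)) (hμ : ∀ α : ℂ, IsC2 n α (μ α))
    (ν : AlternatingMap ℂ (nV n) (nV n) (Fin n)) (hν : IsC1 n ν) :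
    ⇑ν ∈ closure (⋃ α : ℂ, glOrbit n ⇑(μ α)) := by
  obtain ⟨m, rfl⟩ := Nat.exists_eq_add_of_le' hn
  refine mem_closure_of_forall_add_smul_mem (y := ⇑(μ 1 - ν)) fun t ht =>
    Set.mem_iUnion.2 ⟨t⁻¹ ^ 2, diagEquiv (c2ToC1Diag m (Units.mk0 t ht)), ?_⟩
  exact (glAct_c2ToC1Diag_of_isC2 (Units.mk0 t ht) (hμ _) (hμ 1) hν).symm
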